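/- arXiv:1606.06977 — 4 statements merged into one kernel-verified Lean document; each statement's English description precedes it below -/
import Mathlib

section
/- Let p, q ∈ ℕ with p ≤ q + 1, let a_1, …, a_p ∈ ℂ, let b_1, …, b_{q+1} ∈ ℂ with b_{q+1} = 1 and with no b_i a nonpositive integer, and let z ∈ ℂ. For k ∈ ℕ set T(k) = z^k · ∏_{i=1}^p (a_i)_k / ∏_{i=1}^{q+1} (b_i)_k. Let N ∈ ℕ be such that Re(b_i) + N > 0 for every i ∈ {1, …, q+1}, and set D = |z| · ∏_{i=1}^p (1 + |a_i − b_i| / |b_i + N|) · ∏_{i=p+1}^{q+1} 1 / |b_i + N|. If D < 1, then the series ∑_{k=N}^∞ T(k) converges absolutely and |∑_{k=N}^∞ T(k)| ≤ |T(N)| / (1 − D). -/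
/-! For `k ≥ N` the real part of `b i + N` is positive, so `‖b i + N‖ ≤ ‖b i + k‖`. Pairing
`a i + k` with `b i + k` and using `‖a i + k‖ ≤ ‖b i + k‖ + ‖a i - b i‖`, the ratio
`T (k + 1) / T k = z ∏ (a i + k) / ∏ (b i + k)` has norm at most `D`. The tail is then
dominated by the geometric series `‖T N‖ ∑ Dᵏ`. -/

open Finset

section GeometricTail

variable {E : Type*} [SeminormedAddCommGroup E] {f : ℕ → E} {D : ℝ}

theorem norm_le_norm_zero_mul_pow_of_norm_succ_le (hD0 : 0 ≤ D)
    (h : ∀ k, ‖f (k + 1)‖ ≤ D * ‖f k‖) (k : ℕ) : ‖f k‖ ≤ ‖f 0‖ * D ^ k := by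
  rw [mul_comm]
  exact le_geom (u := fun k => ‖f k‖) hD0 k fun i _ => h i

theorem summable_norm_of_norm_succ_le (hD0 : 0 ≤ D) (hD1 : D < 1)
    (h : ∀ k, ‖f (k + 1)‖ ≤ D * ‖f k‖) : Summable fun k => ‖f k‖ :=
  .of_nonneg_of_le (fun _ => norm_nonneg _)
    (norm_le_norm_zero_mul_pow_of_norm_succ_le hD0 h)
    ((summable_geometric_of_lt_one hD0 hD1).mul_left _)

theorem norm_tsum_le_of_norm_succ_le (hD0 : 0 ≤ D) (hD1 : D < 1)
    (h : ∀ k, ‖f (k + 1)‖ ≤ D * ‖f k‖) : ‖∑' k, f k‖ ≤ ‖f 0‖ / (1 - D) :=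
  calc ‖∑' k, f k‖ ≤ ∑' k, ‖f k‖ :=
        norm_tsum_le_tsum_norm (summable_norm_of_norm_succ_le hD0 hD1 h)
    _ ≤ ∑' k, ‖f 0‖ * D ^ k :=
        (summable_norm_of_norm_succ_le hD0 hD1 h).tsum_le_tsum
          (norm_le_norm_zero_mul_pow_of_norm_succ_le hD0 h)
          ((summable_geometric_of_lt_one hD0 hD1).mul_left _)
    _ = ‖f 0‖ / (1 - D) := by
        rw [tsum_mul_left, tsum_geometric_of_lt_one hD0 hD1, div_eq_mul_inv]

end GeometricTail

theorem Complex.norm_add_ofReal_le_of_le (b : ℂ) {s t : ℝ} (hs : 0 ≤ b.re + s) (hst : s ≤ t) :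
    ‖b + s‖ ≤ ‖b + t‖ := by
  rw [Complex.norm_def, Complex.norm_def]
  apply Real.sqrt_le_sqrt
  simp only [Complex.normSq_apply, Complex.add_re, Complex.add_im, Complex.ofReal_re,
    Complex.ofReal_im]
  nlinarith

theorem norm_div_norm_le_one_add {F : Type*} [SeminormedAddCommGroup F] (x y : F) :
    ‖x‖ / ‖y‖ ≤ 1 + ‖x - y‖ / ‖y‖ := by
  rcases (norm_nonneg y).eq_or_lt with hy | hy
  · simp [← hy]
  · rw [div_le_iff₀ hy, add_mul, one_mul, div_mul_cancel₀ _ hy.ne']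
    exact norm_le_norm_add_norm_sub' x y

/-- The term `T k` of the statement. -/
noncomputable def pFqTerm (p q : ℕ) (a b : ℕ → ℂ) (z : ℂ) (k : ℕ) : ℂ :=
  z ^ k * (∏ i ∈ range p, ∏ j ∈ range k, (a i + (j : ℂ)))
    / (∏ i ∈ range (q + 1), ∏ j ∈ range k, (b i + (j : ℂ)))

noncomputable def pFqRatio (p q : ℕ) (a b : ℕ → ℂ) (z : ℂ) (k : ℕ) : ℂ :=
  z * (∏ i ∈ range p, (a i + (k : ℂ))) / ∏ i ∈ range (q + 1), (b i + (k : ℂ))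

theorem pFqTerm_succ (p q : ℕ) (a b : ℕ → ℂ) (z : ℂ) (k : ℕ) :
    pFqTerm p q a b z (k + 1) = pFqTerm p q a b z k * pFqRatio p q a b z k := by
  simp only [pFqTerm, pFqRatio, prod_range_succ, prod_mul_distrib, pow_succ]
  rw [div_mul_div_comm]
  ring

theorem norm_pFqRatio_le {p q : ℕ} (hpq : p ≤ q + 1) (a : ℕ → ℂ) {b : ℕ → ℂ} (z : ℂ)
    {N k : ℕ} (hN : ∀ i ≤ q, 0 < (b i).re + N) (hk : N ≤ k) :
    ‖pFqRatio p q a b z k‖ ≤ ‖z‖ * (∏ i ∈ range p, (1 + ‖a i - b i‖ / ‖b i + (N : ℂ)‖))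
      * ∏ i ∈ Ico p (q + 1), 1 / ‖b i + (N : ℂ)‖ := by
  have hpos : ∀ i ≤ q, 0 < ‖b i + (N : ℂ)‖ := fun i hi =>
    (hN i hi).trans_le (by simpa using Complex.re_le_norm (b i + N))
  have hmono : ∀ i ≤ q, ‖b i + (N : ℂ)‖ ≤ ‖b i + (k : ℂ)‖ := fun i hi => by
    exact_mod_cast Complex.norm_add_ofReal_le_of_le (b i) (hN i hi).le (Nat.cast_le.mpr hk)
  have hsplit : ∏ i ∈ range (q + 1), ‖b i + (k : ℂ)‖
      = (∏ i ∈ range p, ‖b i + (k : ℂ)‖) * ∏ i ∈ Ico p (q + 1), ‖b i + (k : ℂ)‖ := by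
    rw [range_eq_Ico, ← prod_Ico_consecutive _ p.zero_le hpq, ← range_eq_Ico]
  have hnorm : ‖pFqRatio p q a b z k‖ = ‖z‖ * (∏ i ∈ range p, ‖a i + (k : ℂ)‖ / ‖b i + (k : ℂ)‖)
      * ∏ i ∈ Ico p (q + 1), 1 / ‖b i + (k : ℂ)‖ := by
    rw [pFqRatio, norm_div, norm_mul, norm_prod, norm_prod, hsplit, prod_div_distrib,
      prod_div_distrib, prod_const_one]
    ring
  rw [hnorm]
  gcongr with i hi i hi
  · have hiq : i ≤ q := by have := mem_range.mp hi; omega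
    calc ‖a i + (k : ℂ)‖ / ‖b i + (k : ℂ)‖ ≤ 1 + ‖a i - b i‖ / ‖b i + (k : ℂ)‖ := by
          simpa using norm_div_norm_le_one_add (a i + k) (b i + k)
      _ ≤ 1 + ‖a i - b i‖ / ‖b i + (N : ℂ)‖ := by
          gcongr 1 + ?_
          exact div_le_div_of_nonneg_left (norm_nonneg _) (hpos i hiq) (hmono i hiq)
  · exact hpos i (Nat.le_of_lt_succ (mem_Ico.mp hi).2)
  · exact hmono i (Nat.le_of_lt_succ (mem_Ico.mp hi).2)

theorem pFq_tail_bound_general (p q : ℕ) (hpq : p ≤ q + 1) (a b : ℕ → ℂ)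
    (z : ℂ) (N : ℕ)
    (T : ℕ → ℂ)
    (hT : ∀ k, T k =
      z ^ k * (∏ i ∈ range p, ∏ j ∈ range k, (a i + (j : ℂ)))
        / (∏ i ∈ range (q + 1), ∏ j ∈ range k, (b i + (j : ℂ))))
    (hN : ∀ i ≤ q, 0 < (b i).re + N)
    (D : ℝ)
    (hD : D = ‖z‖
        * (∏ i ∈ range p,
            (1 + ‖a i - b i‖ / ‖b i + (N : ℂ)‖))
        * (∏ i ∈ Finset.Ico p (q + 1), 1 / ‖b i + (N : ℂ)‖))
    (hD1 : D < 1) :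
    Summable (fun k : ℕ => ‖T (N + k)‖) ∧
      ‖∑' k : ℕ, T (N + k)‖ ≤ ‖T N‖ / (1 - D) := by
  obtain rfl : T = pFqTerm p q a b z := funext hT
  have hD0 : 0 ≤ D := hD ▸ by positivity
  have hstep : ∀ k, ‖pFqTerm p q a b z (N + k + 1)‖ ≤ D * ‖pFqTerm p q a b z (N + k)‖ :=
    fun k => by
      rw [pFqTerm_succ, norm_mul, mul_comm, hD]
      exact mul_le_mul_of_nonneg_right (norm_pFqRatio_le hpq a z hN (N.le_add_right k))
        (norm_nonneg _)
  exact ⟨summable_norm_of_norm_succ_le hD0 hD1 hstep,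
    norm_tsum_le_of_norm_succ_le hD0 hD1 hstep⟩

/-- Tail bound for the convergent generalized hypergeometric series
(Theorem 4.1 of the paper). Parameters are 0-indexed: `a 0, …, a (p-1)`
are the upper parameters and `b 0, …, b q` the lower parameters with
`b q = 1` playing the role of the factorial. -/
theorem pFq_tail_bound (p q : ℕ) (hpq : p ≤ q + 1) (a b : ℕ → ℂ)
    (hblast : b q = 1)
    (hbint : ∀ i ≤ q, ∀ m : ℕ, b i ≠ -(m : ℂ))
    (z : ℂ) (N : ℕ)
    (T : ℕ → ℂ)
    (hT : ∀ k, T k =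
      z ^ k * (∏ i ∈ range p, ∏ j ∈ range k, (a i + (j : ℂ)))
        / (∏ i ∈ range (q + 1), ∏ j ∈ range k, (b i + (j : ℂ))))
    (hN : ∀ i ≤ q, 0 < (b i).re + N)
    (D : ℝ)
    (hD : D = ‖z‖
        * (∏ i ∈ range p,
            (1 + ‖a i - b i‖ / ‖b i + (N : ℂ)‖))
        * (∏ i ∈ Finset.Ico p (q + 1), 1 / ‖b i + (N : ℂ)‖))
    (hD1 : D < 1) :
    Summable (fun k : ℕ => ‖T (N + k)‖) ∧
      ‖∑' k : ℕ, T (N + k)‖ ≤ ‖T N‖ / (1 - D) :=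
  pFq_tail_bound_general p q hpq a b z N T hT hN D hD hD1
end

section
/- Let A, B ∈ ℂ[[x]] be formal power series with B_{[0]} ≠ 0. Define |A| ∈ ℝ[[x]] as the series whose k-th coefficient is |A_{[k]}|, and define 𝓡(B) ∈ ℝ[[x]] as the series with constant coefficient |B_{[0]}| and k-th coefficient −|B_{[k]}| for k ≥ 1. Then 𝓡(B) is invertible in ℝ[[x]], every coefficient of 𝓡(B)^{-1} is nonnegative, and for every k ∈ ℕ one has |(A · B^{-1})_{[k]}| ≤ (|A| · 𝓡(B)^{-1})_{[k]}. -/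
/-!
Both `B⁻¹` and `𝓡(B)⁻¹` are computed by the same recurrence on coefficients,
`(1/B)_[n] = -B_[0]⁻¹ ∑_{i+j=n, j<n} B_[i] (1/B)_[j]`. For `𝓡(B)` the signs of the
higher coefficients cancel the leading minus, so every term is nonnegative, and by strong
induction the triangle inequality gives `|(1/B)_[n]| ≤ (𝓡(B)⁻¹)_[n]`. Coefficientwise
majorization is preserved by products, which yields the bound for `A · B⁻¹`.
-/

/-- For `A ∈ ℂ[[x]]`, `|A| ∈ ℝ[[x]]` is the series whose `k`-th coefficient
is `|A_[k]|`. -/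
noncomputable def psAbs (A : PowerSeries ℂ) : PowerSeries ℝ :=
  PowerSeries.mk fun k => ‖PowerSeries.coeff k A‖

/-- For `B ∈ ℂ[[x]]`, `𝓡(B) ∈ ℝ[[x]]` has constant coefficient `|B_[0]|`
and `k`-th coefficient `−|B_[k]|` for `k ≥ 1`. -/
noncomputable def psR (B : PowerSeries ℂ) : PowerSeries ℝ :=
  PowerSeries.mk fun k =>
    if k = 0 then ‖PowerSeries.coeff 0 B‖
    else -‖PowerSeries.coeff k B‖

open PowerSeries Finset

theorem PowerSeries.norm_coeff_mul_le_coeff_mul {R : Type*} [SeminormedRing R]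
    {f g : PowerSeries R} {F G : PowerSeries ℝ}
    (hf : ∀ k, ‖coeff k f‖ ≤ coeff k F) (hg : ∀ k, ‖coeff k g‖ ≤ coeff k G) (n : ℕ) :
    ‖coeff n (f * g)‖ ≤ coeff n (F * G) := by
  rw [coeff_mul, coeff_mul]
  refine (norm_sum_le _ _).trans (sum_le_sum fun x _ => (norm_mul_le _ _).trans ?_)
  exact mul_le_mul (hf _) (hg _) (norm_nonneg _) ((norm_nonneg _).trans (hf _))

theorem coeff_psAbs (A : PowerSeries ℂ) (k : ℕ) : coeff k (psAbs A) = ‖coeff k A‖ :=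
  coeff_mk _ _

section psR

variable (B : PowerSeries ℂ)

theorem constantCoeff_psR : constantCoeff (psR B) = ‖constantCoeff B‖ := by
  simp [psR, ← coeff_zero_eq_constantCoeff]

theorem coeff_psR_of_ne_zero {k : ℕ} (hk : k ≠ 0) : coeff k (psR B) = -‖coeff k B‖ := by
  simp [psR, hk]

theorem coeff_inv_psR_of_ne_zero {n : ℕ} (hn : n ≠ 0) :
    coeff n (psR B)⁻¹ = ‖constantCoeff B‖⁻¹ *
      ∑ x ∈ antidiagonal n, if x.2 < n then ‖coeff x.1 B‖ * coeff x.2 (psR B)⁻¹ else 0 := by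
  rw [coeff_inv, if_neg hn, constantCoeff_psR, neg_mul, ← mul_neg, ← sum_neg_distrib]
  congr 1
  refine sum_congr rfl fun x hx => ?_
  split_ifs with h
  · have hx1 : x.1 ≠ 0 := by rw [HasAntidiagonal.mem_antidiagonal] at hx; omega
    rw [coeff_psR_of_ne_zero B hx1, neg_mul, neg_neg]
  · exact neg_zero

theorem norm_coeff_inv_le_coeff_inv_psR (n : ℕ) : ‖coeff n B⁻¹‖ ≤ coeff n (psR B)⁻¹ := by
  induction n using Nat.strong_induction_on with
  | _ n ih =>
    rcases eq_or_ne n 0 with rfl | hn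
    · simp [coeff_inv, constantCoeff_psR]
    rw [coeff_inv, if_neg hn, coeff_inv_psR_of_ne_zero B hn, norm_mul, norm_neg, norm_inv]
    gcongr
    refine (norm_sum_le _ _).trans (sum_le_sum fun x _ => ?_)
    split_ifs with h
    · rw [norm_mul]
      gcongr
      exact ih _ h
    · simp

end psR

/-- If `B_[0] ≠ 0`, then `𝓡(B)` is invertible in `ℝ[[x]]`, its inverse has
nonnegative coefficients, and `|(A·B⁻¹)_[k]| ≤ (|A|·𝓡(B)⁻¹)_[k]` for all `k`. -/
theorem psR_inv_majorizes_quotient (A B : PowerSeries ℂ)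
    (hB : PowerSeries.constantCoeff B ≠ 0) :
    psR B * (psR B)⁻¹ = 1 ∧
    (∀ k : ℕ, 0 ≤ PowerSeries.coeff k (psR B)⁻¹) ∧
    (∀ k : ℕ, ‖PowerSeries.coeff k (A * B⁻¹)‖ ≤
      PowerSeries.coeff k (psAbs A * (psR B)⁻¹)) := by
  have hR : constantCoeff (psR B) ≠ 0 := by
    rw [constantCoeff_psR]
    exact norm_ne_zero_iff.mpr hB
  refine ⟨PowerSeries.mul_inv_cancel _ hR, fun k => ?_, ?_⟩
  · exact (norm_nonneg _).trans (norm_coeff_inv_le_coeff_inv_psR B k)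
  · exact norm_coeff_mul_le_coeff_mul (fun k => (coeff_psAbs A k).ge)
      (norm_coeff_inv_le_coeff_inv_psR B)
end

section
/- Let a, b, c, z_0 ∈ ℂ with z_0 ≠ 0 and z_0 ≠ 1. Let f : ℕ → ℂ satisfy, for all k ∈ ℕ, the recurrence R_2(k) f(k+2) + R_1(k) f(k+1) + R_0(k) f(k) = 0, where R_2(k) = (k+1)(k+2)(z_0 − 1) z_0, R_1(k) = (k+1)(2k + a + b + 1) z_0 − (k+1)(k + c), and R_0(k) = (a + k)(b + k). Let ν, M_0, M_1, N, A be real numbers satisfying ν ≥ max(1/|z_0 − 1|, 1/|z_0|), M_0 ≥ 2 ν |ab|, M_1 ≥ ν (|a + b + 1| + 2|c|), N ≥ max(√(2 M_0), 2 M_1) / ν, and A ≥ max(|f(0)|, |f(1)| / (ν (N + 1))). Then for every k ∈ ℕ, |f(k)| ≤ A · ((N+1)_k / k!) · ν^k. -/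
/-!
Partial fractions split the equation as `f'' = H₀ / (x + z₀) + H₁ / (x + z₀ - 1)`, with `H₀, H₁`
linear combinations of `f` and `f'`. Dividing a series by `x + z` with `1 / |z| ≤ ν` costs a
factor `ν` per coefficient, so `|f k|` and the sum `S k` of the absolute coefficients of the two
quotients obey a coupled recurrence inequality. The coefficients `A binom(N + k, k) νᵏ` of
`A (1 - ν x)^{-(N+1)}` satisfy the reverse inequality as soon as `2 M₀ ≤ (ν N)²` and
`2 M₁ ≤ ν N`, and they dominate `|f|` at `k = 0, 1`; a joint induction then compares the two.
-/

open Finset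

section Recurrence

variable {K : Type*}

theorem eq_zero_of_recurrence₂ [Ring K] [NoZeroDivisors K] {p q r : K} (hp : p ≠ 0) {s : ℕ → K}
    (hs : ∀ k, p * s (k + 2) + q * s (k + 1) + r * s k = 0) (h0 : s 0 = 0) (h1 : s 1 = 0) :
    ∀ k, s k = 0 := by
  intro k
  induction k using Nat.twoStepInduction with
  | zero => exact h0
  | one => exact h1
  | more k ih0 ih1 => simpa [ih0, ih1, hp] using hs k

/-- The Taylor coefficients of `x H(x) / (z + x)`, where `H(x) = ∑ h k xᵏ`. -/
noncomputable def divLinearCoeff [Field K] (z : K) (h : ℕ → K) : ℕ → K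
  | 0 => 0
  | k + 1 => (h k - divLinearCoeff z h k) / z

@[simp]
theorem divLinearCoeff_zero [Field K] (z : K) (h : ℕ → K) : divLinearCoeff z h 0 = 0 :=
  rfl

theorem mul_divLinearCoeff_succ_add [Field K] {z : K} (hz : z ≠ 0) (h : ℕ → K) (k : ℕ) :
    z * divLinearCoeff z h (k + 1) + divLinearCoeff z h k = h k := by
  rw [divLinearCoeff, mul_div_cancel₀ _ hz, sub_add_cancel]

theorem norm_divLinearCoeff_succ_le [NormedField K] {z : K} {ν : ℝ} (hν : 1 / ‖z‖ ≤ ν)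
    (h : ℕ → K) (k : ℕ) :
    ‖divLinearCoeff z h (k + 1)‖ ≤ ν * (‖h k‖ + ‖divLinearCoeff z h k‖) := by
  rw [divLinearCoeff, norm_div, div_eq_mul_one_div, mul_comm]
  exact mul_le_mul hν (norm_sub_le _ _) (norm_nonneg _)
    ((one_div_nonneg.2 (norm_nonneg z)).trans hν)

end Recurrence

/-- The Taylor coefficients of `c₀ f' + d f`, where `f(x) = ∑ f k xᵏ`. -/
def derivCombo {K : Type*} [Semiring K] (c₀ d : K) (f : ℕ → K) (k : ℕ) : K :=
  c₀ * (k + 1) * f (k + 1) + d * f k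

theorem norm_derivCombo_le {𝕜 : Type*} [RCLike 𝕜] (c₀ d : 𝕜) (f : ℕ → 𝕜) (k : ℕ) :
    ‖derivCombo c₀ d f k‖ ≤ ‖c₀‖ * ((k + 1) * ‖f (k + 1)‖) + ‖d‖ * ‖f k‖ := by
  have hk : ‖(k : 𝕜) + 1‖ = k + 1 := by exact_mod_cast RCLike.norm_natCast (K := 𝕜) (k + 1)
  refine (norm_add_le _ _).trans_eq ?_
  rw [norm_mul, norm_mul, norm_mul, hk, mul_assoc]

section Majorant

/-- The Taylor coefficients of `A (1 - ν x)^{-(N+1)}`. -/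
noncomputable def binomMajorant (A N ν : ℝ) (k : ℕ) : ℝ :=
  A * ((∏ j ∈ range k, (N + 1 + (j : ℝ))) / (k.factorial : ℝ)) * ν ^ k

variable {A N ν : ℝ}

@[simp]
theorem binomMajorant_zero : binomMajorant A N ν 0 = A := by
  simp [binomMajorant]

theorem binomMajorant_one : binomMajorant A N ν 1 = A * (ν * (N + 1)) := by
  simp [binomMajorant]; ring

theorem binomMajorant_nonneg (hA : 0 ≤ A) (hN : 0 ≤ N + 1) (hν : 0 ≤ ν) (k : ℕ) :
    0 ≤ binomMajorant A N ν k := by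
  unfold binomMajorant
  have : 0 ≤ ∏ j ∈ range k, (N + 1 + (j : ℝ)) := prod_nonneg fun j _ => by positivity
  positivity

theorem succ_mul_binomMajorant_succ (k : ℕ) :
    (k + 1) * binomMajorant A N ν (k + 1) = ν * (N + 1 + k) * binomMajorant A N ν k := by
  simp only [binomMajorant, prod_range_succ, Nat.factorial_succ, Nat.cast_mul, pow_succ]
  field_simp
  push_cast
  ring

theorem binomMajorant_recurrence_le {M₀ M₁ : ℝ} (hA : 0 ≤ A) (hN : 0 ≤ N) (hν : 0 ≤ ν)
    (hM₀ : 2 * M₀ ≤ (ν * N) ^ 2) (hM₁ : 2 * M₁ ≤ ν * N) (k : ℕ) :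
    M₁ * ((k + 1) * binomMajorant A N ν (k + 1)) + M₀ * binomMajorant A N ν k
        + ν * (k * (k + 1) * binomMajorant A N ν (k + 1))
      ≤ (k + 1) * (k + 2) * binomMajorant A N ν (k + 2) := by
  have hu₁ := succ_mul_binomMajorant_succ (A := A) (N := N) (ν := ν) k
  have hu₂ : (k + 2) * binomMajorant A N ν (k + 2)
      = ν * (N + 2 + k) * binomMajorant A N ν (k + 1) := by
    have := succ_mul_binomMajorant_succ (A := A) (N := N) (ν := ν) (k + 1)
    push_cast at this
    linear_combination this
  have hv : 0 ≤ binomMajorant A N ν k := binomMajorant_nonneg hA (by linarith) hν k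
  have h₁ := mul_le_mul_of_nonneg_right hM₁
    (by positivity : 0 ≤ ν * (N + 1 + k) * binomMajorant A N ν k)
  have h₀ := mul_le_mul_of_nonneg_right hM₀ hv
  have h₂ : 0 ≤ ν ^ 2 * (N + 1 + k) * binomMajorant A N ν k := by positivity
  have h₃ : 0 ≤ ν ^ 2 * N * (1 + k) * binomMajorant A N ν k := by positivity
  calc _ = M₁ * (ν * (N + 1 + k) * binomMajorant A N ν k) + M₀ * binomMajorant A N ν k
          + ν * k * ((k + 1) * binomMajorant A N ν (k + 1)) := by
        linear_combination M₁ * hu₁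
    _ ≤ ν * (N + 2) * (ν * (N + 1 + k) * binomMajorant A N ν k)
          + ν * k * ((k + 1) * binomMajorant A N ν (k + 1)) := by
        linarith
    _ = _ := by linear_combination -(ν * (N + 2)) * hu₁ - (k + 1) * hu₂

end Majorant

theorem le_of_coupled_recurrence {φ S u : ℕ → ℝ} {M₀ M₁ ν : ℝ} (hM₀ : 0 ≤ M₀) (hM₁ : 0 ≤ M₁)
    (hν : 0 ≤ ν) (hS₀ : S 0 ≤ 0)
    (hS : ∀ k : ℕ, S (k + 1) ≤ M₁ * ((k + 1) * φ (k + 1)) + M₀ * φ k + ν * S k)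
    (hφ : ∀ k : ℕ, (k + 1) * (k + 2) * φ (k + 2) ≤ S (k + 1))
    (hu : ∀ k : ℕ, M₁ * ((k + 1) * u (k + 1)) + M₀ * u k + ν * (k * (k + 1) * u (k + 1))
      ≤ (k + 1) * (k + 2) * u (k + 2))
    (h₀ : φ 0 ≤ u 0) (h₁ : φ 1 ≤ u 1) (k : ℕ) : φ k ≤ u k := by
  suffices key : ∀ k : ℕ, φ k ≤ u k ∧ φ (k + 1) ≤ u (k + 1) ∧ S k ≤ k * (k + 1) * u (k + 1) from
    (key k).1
  intro k
  induction k with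
  | zero => exact ⟨h₀, h₁, by simpa using hS₀⟩
  | succ k ih =>
    obtain ⟨hk, hk₁, hSk⟩ := ih
    have hSk₁ : S (k + 1) ≤ (k + 1) * (k + 2) * u (k + 2) :=
      calc S (k + 1) ≤ M₁ * ((k + 1) * φ (k + 1)) + M₀ * φ k + ν * S k := hS k
        _ ≤ M₁ * ((k + 1) * u (k + 1)) + M₀ * u k + ν * (k * (k + 1) * u (k + 1)) := by
          gcongr
        _ ≤ _ := hu k
    refine ⟨hk₁, le_of_mul_le_mul_left ((hφ k).trans hSk₁) (by positivity), ?_⟩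
    push_cast
    linarith

section PartialFractions

variable (a b c z0 : ℂ) (f : ℕ → ℂ)

def GaussCoeffRecurrence : Prop :=
  ∀ k : ℕ,
    ((k : ℂ) + 1) * ((k : ℂ) + 2) * (z0 - 1) * z0 * f (k + 2)
      + (((k : ℂ) + 1) * (2 * (k : ℂ) + a + b + 1) * z0 - ((k : ℂ) + 1) * ((k : ℂ) + c)) * f (k + 1)
      + (a + (k : ℂ)) * (b + (k : ℂ)) * f k = 0

-- Partial fractions turn the equation into
-- `f'' = (-c f' + ab f) / (x + z₀) + ((c - a - b - 1) f' - ab f) / (x + z₀ - 1)`.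
noncomputable def gaussPartialFrac₀ : ℕ → ℂ :=
  divLinearCoeff z0 (derivCombo (-c) (a * b) f)

noncomputable def gaussPartialFrac₁ : ℕ → ℂ :=
  divLinearCoeff (z0 - 1) (derivCombo (c - a - b - 1) (-(a * b)) f)

theorem gauss_coeff_eq_partialFrac (h0 : z0 ≠ 0) (h1 : z0 ≠ 1)
    (hrec : GaussCoeffRecurrence a b c z0 f) (k : ℕ) :
    k * (k + 1) * f (k + 1) = gaussPartialFrac₀ a b c z0 f k + gaussPartialFrac₁ a b c z0 f k := by
  set P₀ := gaussPartialFrac₀ a b c z0 f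
  set P₁ := gaussPartialFrac₁ a b c z0 f
  have hz : z0 * (z0 - 1) ≠ 0 := mul_ne_zero h0 (sub_ne_zero.2 h1)
  have e₀ (k : ℕ) : z0 * P₀ (k + 1) + P₀ k = -c * (k + 1) * f (k + 1) + a * b * f k :=
    mul_divLinearCoeff_succ_add h0 _ k
  have e₁ (k : ℕ) :
      (z0 - 1) * P₁ (k + 1) + P₁ k = (c - a - b - 1) * (k + 1) * f (k + 1) - a * b * f k := by
    rw [show P₁ = divLinearCoeff _ _ from rfl, mul_divLinearCoeff_succ_add (sub_ne_zero.2 h1),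
      derivCombo]
    ring
  rw [← sub_eq_zero]
  refine eq_zero_of_recurrence₂ (s := fun k : ℕ => k * (k + 1) * f (k + 1) - (P₀ k + P₁ k)) hz
    (q := 2 * z0 - 1) (r := 1) (fun k => ?_) ?_ ?_ k
  · have hr := hrec (k + 1)
    have h₀ := e₀ (k + 1)
    have h₁ := e₁ (k + 1)
    push_cast at hr h₀ h₁ ⊢
    linear_combination hr - (z0 - 1) * h₀ - e₀ k - z0 * h₁ - e₁ k
  · simp [P₀, P₁, gaussPartialFrac₀, gaussPartialFrac₁]
  · have hr := hrec 0
    have h₀ := e₀ 0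
    have h₁ := e₁ 0
    simp only [P₀, P₁, gaussPartialFrac₀, gaussPartialFrac₁, divLinearCoeff_zero, add_zero,
      Nat.cast_zero, zero_add] at hr h₀ h₁ ⊢
    refine mul_left_cancel₀ hz ?_
    linear_combination hr - (z0 - 1) * h₀ - z0 * h₁

theorem norm_coeff_le_gaussPartialFrac (h0 : z0 ≠ 0) (h1 : z0 ≠ 1)
    (hrec : GaussCoeffRecurrence a b c z0 f) (k : ℕ) :
    ((k : ℝ) + 1) * (k + 2) * ‖f (k + 2)‖
      ≤ ‖gaussPartialFrac₀ a b c z0 f (k + 1)‖ + ‖gaussPartialFrac₁ a b c z0 f (k + 1)‖ :=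
  calc ((k : ℝ) + 1) * (k + 2) * ‖f (k + 2)‖
      = ‖((k + 1 : ℕ) : ℂ) * ((k + 1 : ℕ) + 1) * f (k + 1 + 1)‖ := by
        rw [show ((k + 1 : ℕ) : ℂ) * ((k + 1 : ℕ) + 1) = ((((k + 1) * (k + 2)) : ℕ) : ℂ) by
          push_cast; ring, norm_mul, Complex.norm_natCast]
        push_cast
        ring
    _ ≤ _ := by
        rw [gauss_coeff_eq_partialFrac a b c z0 f h0 h1 hrec]
        exact norm_add_le _ _

theorem norm_gaussPartialFrac_succ_le {ν M₀ M₁ : ℝ} (hν₀ : 1 / ‖z0‖ ≤ ν) (hν₁ : 1 / ‖z0 - 1‖ ≤ ν)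
    (hM₀ : 2 * ν * ‖a * b‖ ≤ M₀) (hM₁ : ν * (‖a + b + 1‖ + 2 * ‖c‖) ≤ M₁) (k : ℕ) :
    ‖gaussPartialFrac₀ a b c z0 f (k + 1)‖ + ‖gaussPartialFrac₁ a b c z0 f (k + 1)‖
      ≤ M₁ * ((k + 1) * ‖f (k + 1)‖) + M₀ * ‖f k‖
        + ν * (‖gaussPartialFrac₀ a b c z0 f k‖ + ‖gaussPartialFrac₁ a b c z0 f k‖) := by
  have hν : 0 ≤ ν := (one_div_nonneg.2 (norm_nonneg z0)).trans hν₀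
  have hc : ‖c - a - b - 1‖ ≤ ‖a + b + 1‖ + ‖c‖ := by
    rw [show c - a - b - 1 = c - (a + b + 1) by ring]
    exact (norm_sub_le c (a + b + 1)).trans_eq (add_comm _ _)
  have b₀ := (norm_divLinearCoeff_succ_le hν₀ _ k).trans
    (mul_le_mul_of_nonneg_left (add_le_add_left (norm_derivCombo_le (-c) (a * b) f k) _) hν)
  have b₁ := (norm_divLinearCoeff_succ_le hν₁ _ k).trans
    (mul_le_mul_of_nonneg_left
      (add_le_add_left (norm_derivCombo_le (c - a - b - 1) (-(a * b)) f k) _) hν)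
  rw [norm_neg] at b₀ b₁
  have hX : 0 ≤ (k + 1) * ‖f (k + 1)‖ := by positivity
  have h₁ := mul_le_mul_of_nonneg_right
    ((mul_le_mul_of_nonneg_left (by linarith) hν).trans hM₁ : ν * (‖c‖ + ‖c - a - b - 1‖) ≤ M₁) hX
  have h₀ := mul_le_mul_of_nonneg_right hM₀ (norm_nonneg (f k))
  unfold gaussPartialFrac₀ gaussPartialFrac₁
  linarith

end PartialFractions

/-- Theorem 7.1 of the paper: a Cauchy–Kovalevskaya type bound
`|f(k)| ≤ A · binom(N+k, k) · ν^k` for the Taylor coefficients of a solution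
of the Gauss hypergeometric ODE recentered at `z₀`. Here
`binom(N+k, k) = (N+1)_k / k!` with `(N+1)_k = ∏_{j<k} (N+1+j)`. -/
theorem gauss2F1_coeff_majorant (a b c z0 : ℂ) (h0 : z0 ≠ 0) (h1 : z0 ≠ 1)
    (f : ℕ → ℂ)
    (hrec : ∀ k : ℕ,
      ((k : ℂ) + 1) * ((k : ℂ) + 2) * (z0 - 1) * z0 * f (k + 2)
      + (((k : ℂ) + 1) * (2 * (k : ℂ) + a + b + 1) * z0
          - ((k : ℂ) + 1) * ((k : ℂ) + c)) * f (k + 1)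
      + (a + (k : ℂ)) * (b + (k : ℂ)) * f k = 0)
    (ν M0 M1 N A : ℝ)
    (hν : ν ≥ max (1 / ‖z0 - 1‖) (1 / ‖z0‖))
    (hM0 : M0 ≥ 2 * ν * ‖a * b‖)
    (hM1 : M1 ≥ ν * (‖a + b + 1‖ + 2 * ‖c‖))
    (hN : N ≥ max (Real.sqrt (2 * M0)) (2 * M1) / ν)
    (hA : A ≥ max (‖f 0‖) (‖f 1‖ / (ν * (N + 1)))) :
    ∀ k : ℕ, ‖f k‖ ≤
      A * ((∏ j ∈ Finset.range k, (N + 1 + (j : ℝ))) / (k.factorial : ℝ))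
        * ν ^ k := by
  have hν₀ : 1 / ‖z0‖ ≤ ν := le_of_max_le_right hν
  have hν₁ : 1 / ‖z0 - 1‖ ≤ ν := le_of_max_le_left hν
  have hνpos : 0 < ν := (one_div_pos.2 (norm_pos_iff.2 h0)).trans_le hν₀
  have hνN : max (√(2 * M0)) (2 * M1) ≤ ν * N := (div_le_iff₀' hνpos).1 hN
  obtain ⟨hνN₀, hM₀N⟩ := Real.sqrt_le_iff.1 (le_of_max_le_left hνN)
  have hN₀ : 0 ≤ N := nonneg_of_mul_nonneg_right hνN₀ hνpos
  have hM₀ : 0 ≤ M0 := le_trans (by positivity) hM0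
  have hM₁ : 0 ≤ M1 := le_trans (by positivity) hM1
  have hA₀ : 0 ≤ A := (norm_nonneg _).trans (le_of_max_le_left hA)
  intro k
  refine le_of_coupled_recurrence (φ := fun k => ‖f k‖)
    (S := fun k => ‖gaussPartialFrac₀ a b c z0 f k‖ + ‖gaussPartialFrac₁ a b c z0 f k‖)
    hM₀ hM₁ hνpos.le (by simp [gaussPartialFrac₀, gaussPartialFrac₁])
    (norm_gaussPartialFrac_succ_le a b c z0 f hν₀ hν₁ hM0 hM1)
    (norm_coeff_le_gaussPartialFrac a b c z0 f h0 h1 hrec)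
    (binomMajorant_recurrence_le hA₀ hN₀ hνpos.le hM₀N (le_of_max_le_right hνN))
    (by simpa using le_of_max_le_left hA) ?_ k
  rw [binomMajorant_one]
  exact (div_le_iff₀ (by positivity)).1 (le_of_max_le_right hA)
end

section
/- Let a, b, c, z_0 ∈ ℂ with z_0 ≠ 0 and z_0 ≠ 1, and let ν, M_0, M_1 be real numbers with ν ≥ max(1/|z_0 − 1|, 1/|z_0|), M_0 ≥ 2 ν |ab|, and M_1 ≥ ν (|a + b + 1| + 2|c|). Let P_2(z) = (z + z_0)(z + z_0 − 1), P_1(z) = (a + b + 1)(z + z_0) − c, P_0(z) = ab. Then the Taylor coefficients at z = 0 of the rational functions −P_0(z)/P_2(z) and −P_1(z)/P_2(z) satisfy, for every k ∈ ℕ: |(−P_0/P_2)_{[k]}| ≤ M_0 ν^k and |(−P_1/P_2)_{[k]}| ≤ M_1 ν^k. -/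
/-!
Both `P₀` and `P₁` are linear in `z`, so writing them as `p (z + z₀) + q (z + z₀ - 1)` splits
`-Pᵢ/P₂` into partial fractions `p/(z + z₀ - 1) + q/(z + z₀)`. The `k`-th coefficient of
`1/(z + w)` is `(-1)ᵏ w⁻⁽ᵏ⁺¹⁾`, of modulus at most `ν^(k+1)` once `|w|⁻¹ ≤ ν`, so the `k`-th
coefficient of the partial-fraction sum is at most `(|p| + |q|) ν^(k+1)`.
-/

open PowerSeries

namespace PowerSeries

variable {k : Type*} [Field k]

theorem inv_X_add_C {w : k} (hw : w ≠ 0) :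
    (X + C w)⁻¹ = mk fun n => (-1) ^ n * w⁻¹ ^ (n + 1) := by
  rw [PowerSeries.inv_eq_iff_mul_eq_one (by simp [hw])]
  ext (_ | n)
  · simp [hw]
  · rw [mul_add, map_add, coeff_succ_mul_X, coeff_mul_C]
    simp only [coeff_mk, coeff_one, Nat.succ_ne_zero, if_false]
    linear_combination -(-1) ^ n * w⁻¹ ^ (n + 1) * mul_inv_cancel₀ hw

theorem mul_add_mul_mul_inv_mul (p q f g : k⟦X⟧) (hf : constantCoeff f ≠ 0)
    (hg : constantCoeff g ≠ 0) :
    (p * f + q * g) * (f * g)⁻¹ = p * g⁻¹ + q * f⁻¹ := by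
  rw [PowerSeries.mul_inv_rev]
  linear_combination (p * g⁻¹) * PowerSeries.mul_inv_cancel f hf
    + (q * f⁻¹) * PowerSeries.mul_inv_cancel g hg

end PowerSeries

theorem norm_coeff_inv_X_add_C_le {w : ℂ} (hw : w ≠ 0) {ν : ℝ} (hν : ‖w‖⁻¹ ≤ ν) (n : ℕ) :
    ‖coeff n (X + C w)⁻¹‖ ≤ ν ^ (n + 1) := by
  rw [inv_X_add_C hw, coeff_mk, norm_mul, norm_pow, norm_neg, norm_one, one_pow, one_mul,
    norm_pow, norm_inv]
  exact pow_le_pow_left₀ (by positivity) hν _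

theorem norm_coeff_C_mul_inv_add_C_mul_inv_le {w₁ w₂ : ℂ} (hw₁ : w₁ ≠ 0) (hw₂ : w₂ ≠ 0) {ν : ℝ}
    (hν₁ : ‖w₁‖⁻¹ ≤ ν) (hν₂ : ‖w₂‖⁻¹ ≤ ν) (p q : ℂ) (n : ℕ) :
    ‖coeff n (C p * (X + C w₁)⁻¹ + C q * (X + C w₂)⁻¹)‖ ≤ (‖p‖ + ‖q‖) * ν ^ (n + 1) := by
  rw [map_add, coeff_C_mul, coeff_C_mul, add_mul]
  refine (norm_add_le _ _).trans (add_le_add ?_ ?_) <;> rw [norm_mul]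
  · exact mul_le_mul_of_nonneg_left (norm_coeff_inv_X_add_C_le hw₁ hν₁ n) (norm_nonneg _)
  · exact mul_le_mul_of_nonneg_left (norm_coeff_inv_X_add_C_le hw₂ hν₂ n) (norm_nonneg _)

theorem mul_pow_succ_le_of_le {S T M ν : ℝ} (hν : 0 ≤ ν) (hST : S ≤ T) (hM : ν * T ≤ M)
    (k : ℕ) : S * ν ^ (k + 1) ≤ M * ν ^ k := by
  rw [pow_succ, mul_comm (ν ^ k) ν, ← mul_assoc, mul_comm S ν]
  gcongr
  exact (mul_le_mul_of_nonneg_left hST hν).trans hM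

/-- Coefficient bounds for the Taylor expansions at `z = 0` of
`−P₀(z)/P₂(z)` and `−P₁(z)/P₂(z)`, where
`P₂(z) = (z + z₀)(z + z₀ − 1)`, `P₁(z) = (a+b+1)(z+z₀) − c`, `P₀(z) = ab`,
interpreted as formal power series in `ℂ[[z]]` (with the field inverse of
`P₂`, which exists since `P₂(0) = z₀(z₀−1) ≠ 0`). -/
theorem P_over_P2_coeff_bounds (a b c z0 : ℂ) (h0 : z0 ≠ 0) (h1 : z0 ≠ 1)
    (ν M0 M1 : ℝ)
    (hν : ν ≥ max (1 / ‖z0 - 1‖) (1 / ‖z0‖))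
    (hM0 : M0 ≥ 2 * ν * ‖a * b‖)
    (hM1 : M1 ≥ ν * (‖a + b + 1‖ + 2 * ‖c‖))
    (P2 P1 P0 : PowerSeries ℂ)
    (hP2 : P2 = (PowerSeries.X + PowerSeries.C z0)
        * (PowerSeries.X + PowerSeries.C z0 - 1))
    (hP1 : P1 = PowerSeries.C (a + b + 1) * (PowerSeries.X + PowerSeries.C z0)
        - PowerSeries.C c)
    (hP0 : P0 = PowerSeries.C (a * b)) :
    ∀ k : ℕ,
      ‖PowerSeries.coeff k (-P0 * P2⁻¹)‖ ≤ M0 * ν ^ k ∧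
      ‖PowerSeries.coeff k (-P1 * P2⁻¹)‖ ≤ M1 * ν ^ k := by
  have h1' : z0 - 1 ≠ 0 := sub_ne_zero.mpr h1
  obtain ⟨hν1, hν0⟩ : ‖z0 - 1‖⁻¹ ≤ ν ∧ ‖z0‖⁻¹ ≤ ν := by
    simpa only [one_div] using max_le_iff.mp hν
  have hν_nonneg : 0 ≤ ν := (inv_nonneg.mpr (norm_nonneg z0)).trans hν0
  have hP2' : P2 = (X + C z0) * (X + C (z0 - 1)) := by
    rw [hP2, map_sub, map_one, add_sub_assoc]
  have partial_fractions (p q : ℂ) :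
      (C p * (X + C z0) + C q * (X + C (z0 - 1))) * P2⁻¹
        = C p * (X + C (z0 - 1))⁻¹ + C q * (X + C z0)⁻¹ :=
    hP2' ▸ mul_add_mul_mul_inv_mul _ _ _ _ (by simpa using h0) (by simpa using h1')
  have bound (p q : ℂ) (k : ℕ) :
      ‖coeff k (C p * (X + C (z0 - 1))⁻¹ + C q * (X + C z0)⁻¹)‖ ≤ (‖p‖ + ‖q‖) * ν ^ (k + 1) :=
    norm_coeff_C_mul_inv_add_C_mul_inv_le h1' h0 hν1 hν0 p q k
  intro k
  constructor
  · have hP0' : -P0 = C (-(a * b)) * (X + C z0) + C (a * b) * (X + C (z0 - 1)) := by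
      rw [hP0]; simp only [map_sub, map_neg, map_one]; ring
    rw [hP0', partial_fractions]
    refine (bound _ _ k).trans (mul_pow_succ_le_of_le hν_nonneg le_rfl ?_ k)
    rw [norm_neg]; linarith
  · have hP1' : -P1 = C (c - (a + b + 1)) * (X + C z0) + C (-c) * (X + C (z0 - 1)) := by
      rw [hP1]; simp only [map_sub, map_neg, map_add, map_one]; ring
    rw [hP1', partial_fractions]
    refine (bound _ _ k).trans (mul_pow_succ_le_of_le hν_nonneg ?_ hM1 k)
    rw [norm_neg]; linarith [norm_sub_le c (a + b + 1)]
end
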